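/- arXiv:1710.06708 — 2 statements merged into one kernel-verified Lean document; each statement's English description precedes it below -/
import Mathlib

section
/- With the hypotheses and notation of the direct limit construction (α injective), the kernel of the surjective *-homomorphism σ : B → A_∞ (determined by σ(μ_y(a)) = α^y(a)) equals {ξ ∈ B : the net (‖ξ(x)‖)_{x∈Γ} converges to 0}, i.e. ξ ∈ ker σ iff for every ε > 0 there is z ∈ Γ with ‖ξ(x)‖ < ε for all x ≥ z. Moreover ker σ contains the ideal I = cl span{μ_x(a) − μ_y(α_{y−x}(a)) : x < y, a ∈ A}. -/
/-!
An element `η` of the linear span of the `μ_x(a)` agrees from some `z` on with a single `μ_z(b)`,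
and then `σ(η) = ι_z(b)`. The `α_t` are isometric (as `ι_t ∘ α_t = ι_0`), so `‖η(x)‖ = ‖b‖ = ‖σ(η)‖`
for all `x ≥ z`. Approximating `ξ ∈ B` uniformly by such `η` and using the continuity of `σ` gives
`‖ξ(x)‖ → ‖σ(ξ)‖`. Each generator `μ_x(a) - μ_y(α_{y-x}(a))` of `I` vanishes from `y` on, so
`‖ξ(x)‖ → 0` for every `ξ ∈ I`.
-/
open scoped ENNReal

variable {Γ : Type*} [AddCommGroup Γ] [LinearOrder Γ] [IsOrderedAddMonoid Γ] {A : Type*} [NonUnitalCStarAlgebra A]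

/-- The map `μ_x : A → ℓ∞(Γ, A)`, `(μ_x a)(y) = α_{y-x}(a)` for `y ≥ x` and `0` otherwise. -/
noncomputable def mu (α : Γ → (A →⋆ₙₐ[ℂ] A)) (x : Γ) (a : A) :
    lp (fun _ : Γ => A) ∞ :=
  ⟨fun y => if x ≤ y then α (y - x) a else 0,
    memℓp_infty ⟨‖a‖, by
      rintro r ⟨y, rfl⟩
      dsimp only
      split_ifs
      · exact NonUnitalStarAlgHom.norm_apply_le _ _
      · simp⟩⟩

/-- The C*-subalgebra `B = cl span {μ_x(a) : x ∈ Γ, a ∈ A}` of `ℓ∞(Γ, A)`, as a subset. -/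
noncomputable def BSet (α : Γ → (A →⋆ₙₐ[ℂ] A)) : Set (lp (fun _ : Γ => A) ∞) :=
  closure (Submodule.span ℂ {ξ : lp (fun _ : Γ => A) ∞ | ∃ x a, ξ = mu α x a} : Set _)

/-- The ideal `I = cl span {μ_x(a) - μ_y(α_{y-x}(a)) : x < y ∈ Γ, a ∈ A}`, as a subset. -/
noncomputable def ISet (α : Γ → (A →⋆ₙₐ[ℂ] A)) : Set (lp (fun _ : Γ => A) ∞) :=
  closure (Submodule.span ℂ
    {ξ : lp (fun _ : Γ => A) ∞ | ∃ x y a, x < y ∧ ξ = mu α x a - mu α y (α (y - x) a)} : Set _)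

open Filter Topology

theorem tendsto_of_uniform_approx {ι X : Type*} [PseudoMetricSpace X] {l : Filter ι}
    {f : ι → X} {L : X}
    (h : ∀ ε > 0, ∃ (g : ι → X) (L' : X),
      (∀ i, dist (f i) (g i) < ε) ∧ dist L' L < ε ∧ ∀ᶠ i in l, g i = L') :
    Tendsto f l (𝓝 L) := by
  refine Metric.tendsto_nhds.mpr fun ε hε => ?_
  obtain ⟨g, L', hfg, hL', hg⟩ := h (ε / 2) (half_pos hε)
  filter_upwards [hg] with i hi
  calc dist (f i) L ≤ dist (f i) (g i) + dist L' L := by rw [← hi]; exact dist_triangle _ _ _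
    _ < ε / 2 + ε / 2 := add_lt_add (hfg i) hL'
    _ = ε := add_halves ε

theorem dist_norm_apply_le_dist {ι E : Type*} [NormedAddCommGroup E]
    (ξ η : lp (fun _ : ι => E) ∞) (x : ι) : dist ‖ξ x‖ ‖η x‖ ≤ dist ξ η := by
  refine (dist_norm_norm_le _ _).trans ?_
  rw [dist_eq_norm, ← Pi.sub_apply, ← lp.coeFn_sub]
  exact lp.norm_apply_le_norm ENNReal.top_ne_zero _ x

section

variable (α : Γ → (A →⋆ₙₐ[ℂ] A))

noncomputable def BSpan : Submodule ℂ (lp (fun _ : Γ => A) ∞) :=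
  Submodule.span ℂ {ξ | ∃ x a, ξ = mu α x a}

noncomputable def ISpan : Submodule ℂ (lp (fun _ : Γ => A) ∞) :=
  Submodule.span ℂ {ξ | ∃ x y a, x < y ∧ ξ = mu α x a - mu α y (α (y - x) a)}

theorem BSpan_subset_BSet : (BSpan α : Set (lp (fun _ : Γ => A) ∞)) ⊆ BSet α :=
  subset_closure

theorem mu_apply_of_le {x y : Γ} (h : x ≤ y) (a : A) : mu α x a y = α (y - x) a :=
  if_pos h

theorem mu_zero (x : Γ) : mu α x 0 = 0 := by
  ext y
  simp [mu]

variable {α}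

theorem apply_apply_of_le
    (hαadd : ∀ s t : Γ, 0 ≤ s → 0 ≤ t → ∀ a : A, α (s + t) a = α s (α t a))
    {x y z : Γ} (hxy : x ≤ y) (hyz : y ≤ z) (a : A) :
    α (z - y) (α (y - x) a) = α (z - x) a := by
  rw [← hαadd _ _ (sub_nonneg.2 hyz) (sub_nonneg.2 hxy), sub_add_sub_cancel]

theorem norm_apply_of_compat {E F : Type*} [Norm E] [FunLike F A E] (ι : Γ → F)
    (hcompat : ∀ s t : Γ, s ≤ t → ∀ a : A, ι t (α (t - s) a) = ι s a)
    (hiso : ∀ (s : Γ) (a : A), ‖ι s a‖ = ‖a‖) {t : Γ} (ht : 0 ≤ t) (a : A) :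
    ‖α t a‖ = ‖a‖ := by
  have h := hcompat 0 t ht a
  rw [sub_zero] at h
  rw [← hiso t, h, hiso]

theorem exists_tail_eq_mu_of_mem_BSpan {E F : Type*} [AddCommGroup E] [Module ℂ E]
    [FunLike F A E] [LinearMapClass F ℂ A E]
    (hαadd : ∀ s t : Γ, 0 ≤ s → 0 ≤ t → ∀ a : A, α (s + t) a = α s (α t a))
    (ι : Γ → F) (hcompat : ∀ s t : Γ, s ≤ t → ∀ a : A, ι t (α (t - s) a) = ι s a)
    (σ : {ξ : lp (fun _ : Γ => A) ∞ // ξ ∈ BSet α} → E)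
    (hadd : ∀ ξ η (hξ : ξ ∈ BSet α) (hη : η ∈ BSet α) (hs : ξ + η ∈ BSet α),
      σ ⟨ξ + η, hs⟩ = σ ⟨ξ, hξ⟩ + σ ⟨η, hη⟩)
    (hsmul : ∀ (c : ℂ) ξ (hξ : ξ ∈ BSet α) (hs : c • ξ ∈ BSet α),
      σ ⟨c • ξ, hs⟩ = c • σ ⟨ξ, hξ⟩)
    (hmu : ∀ (y : Γ) (a : A) (h : mu α y a ∈ BSet α), σ ⟨mu α y a, h⟩ = ι y a)
    {η : lp (fun _ : Γ => A) ∞}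
    (hη : η ∈ BSpan α) :
    ∃ z b, (∀ x, z ≤ x → η x = α (x - z) b) ∧ ∀ h : η ∈ BSet α, σ ⟨η, h⟩ = ι z b := by
  induction hη using Submodule.span_induction with
  | mem ξ hξ =>
    obtain ⟨x, a, rfl⟩ := hξ
    exact ⟨x, a, fun y hy => mu_apply_of_le α hy a, hmu x a⟩
  | zero =>
    refine ⟨0, 0, fun x _ => by simp, fun h => ?_⟩
    simp_rw [← mu_zero α 0, hmu]
  | add ξ η hξ hη ihξ ihη =>
    obtain ⟨z₁, b₁, hξz, hσξ⟩ := ihξ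
    obtain ⟨z₂, b₂, hηz, hση⟩ := ihη
    have h₁ : z₁ ≤ max z₁ z₂ := le_max_left _ _
    have h₂ : z₂ ≤ max z₁ z₂ := le_max_right _ _
    refine ⟨max z₁ z₂, α (max z₁ z₂ - z₁) b₁ + α (max z₁ z₂ - z₂) b₂, fun x hx => ?_,
      fun h => ?_⟩
    · rw [lp.coeFn_add, Pi.add_apply, hξz x (h₁.trans hx), hηz x (h₂.trans hx), map_add,
        apply_apply_of_le hαadd h₁ hx, apply_apply_of_le hαadd h₂ hx]
    · rw [hadd ξ η (BSpan_subset_BSet α hξ) (BSpan_subset_BSet α hη), hσξ, hση, map_add, hcompat _ _ h₁, hcompat _ _ h₂]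
  | smul c ξ hξ ih =>
    obtain ⟨z, b, hξz, hσξ⟩ := ih
    refine ⟨z, c • b, fun x hx => ?_, fun h => ?_⟩
    · rw [lp.coeFn_smul, Pi.smul_apply, hξz x hx, map_smul]
    · rw [hsmul c ξ (BSpan_subset_BSet α hξ), hσξ, map_smul]

theorem tendsto_norm_apply_sigma {E F : Type*} [SeminormedAddCommGroup E] [Module ℂ E]
    [FunLike F A E] [LinearMapClass F ℂ A E]
    (hαadd : ∀ s t : Γ, 0 ≤ s → 0 ≤ t → ∀ a : A, α (s + t) a = α s (α t a))
    (ι : Γ → F) (hcompat : ∀ s t : Γ, s ≤ t → ∀ a : A, ι t (α (t - s) a) = ι s a)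
    (hiso : ∀ (s : Γ) (a : A), ‖ι s a‖ = ‖a‖)
    (σ : {ξ : lp (fun _ : Γ => A) ∞ // ξ ∈ BSet α} → E) (hcont : Continuous σ)
    (hadd : ∀ ξ η (hξ : ξ ∈ BSet α) (hη : η ∈ BSet α) (hs : ξ + η ∈ BSet α),
      σ ⟨ξ + η, hs⟩ = σ ⟨ξ, hξ⟩ + σ ⟨η, hη⟩)
    (hsmul : ∀ (c : ℂ) ξ (hξ : ξ ∈ BSet α) (hs : c • ξ ∈ BSet α),
      σ ⟨c • ξ, hs⟩ = c • σ ⟨ξ, hξ⟩)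
    (hmu : ∀ (y : Γ) (a : A) (h : mu α y a ∈ BSet α), σ ⟨mu α y a, h⟩ = ι y a)
    {ξ : lp (fun _ : Γ => A) ∞} (hξ : ξ ∈ BSet α) :
    Tendsto (fun x => ‖ξ x‖) atTop (𝓝 ‖σ ⟨ξ, hξ⟩‖) := by
  refine tendsto_of_uniform_approx fun ε hε => ?_
  obtain ⟨δ, hδ, hσδ⟩ := Metric.continuous_iff.mp hcont ⟨ξ, hξ⟩ ε hε
  obtain ⟨η, hη, hξη⟩ := Metric.mem_closure_iff.mp hξ (min δ ε) (lt_min hδ hε)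
  obtain ⟨z, b, hηz, hση⟩ :=
    exists_tail_eq_mu_of_mem_BSpan hαadd ι hcompat σ hadd hsmul hmu hη
  have hηB : η ∈ BSet α := BSpan_subset_BSet α hη
  refine ⟨fun x => ‖η x‖, ‖σ ⟨η, hηB⟩‖, fun x => ?_, ?_, ?_⟩
  · exact (dist_norm_apply_le_dist ξ η x).trans_lt (hξη.trans_le (min_le_right _ _))
  · have hηξ : dist (⟨η, hηB⟩ : BSet α) ⟨ξ, hξ⟩ < δ := by
      rw [Subtype.dist_eq, dist_comm]
      exact hξη.trans_le (min_le_left _ _)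
    refine (dist_norm_norm_le _ _).trans_lt ?_
    rw [← dist_eq_norm]
    exact hσδ _ hηξ
  · filter_upwards [eventually_ge_atTop z] with x hx
    rw [hηz x hx, norm_apply_of_compat ι hcompat hiso (sub_nonneg.2 hx), hση, hiso]

theorem eventually_apply_eq_zero_of_mem_ISpan
    (hαadd : ∀ s t : Γ, 0 ≤ s → 0 ≤ t → ∀ a : A, α (s + t) a = α s (α t a))
    {η : lp (fun _ : Γ => A) ∞} (hη : η ∈ ISpan α) :
    ∀ᶠ x in atTop, η x = 0 := by
  induction hη using Submodule.span_induction with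
  | mem ξ hξ =>
    obtain ⟨x, y, a, hxy, rfl⟩ := hξ
    filter_upwards [eventually_ge_atTop y] with z hz
    rw [lp.coeFn_sub, Pi.sub_apply, mu_apply_of_le α (hxy.le.trans hz),
      mu_apply_of_le α hz, apply_apply_of_le hαadd hxy.le hz, sub_self]
  | zero => exact Eventually.of_forall fun _ => rfl
  | add ξ η _ _ hξ hη =>
    filter_upwards [hξ, hη] with x hξx hηx
    rw [lp.coeFn_add, Pi.add_apply, hξx, hηx, add_zero]
  | smul c ξ _ hξ =>
    filter_upwards [hξ] with x hξx
    rw [lp.coeFn_smul, Pi.smul_apply, hξx, smul_zero]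

theorem tendsto_norm_apply_of_mem_ISet
    (hαadd : ∀ s t : Γ, 0 ≤ s → 0 ≤ t → ∀ a : A, α (s + t) a = α s (α t a))
    {ξ : lp (fun _ : Γ => A) ∞} (hξ : ξ ∈ ISet α) :
    Tendsto (fun x => ‖ξ x‖) atTop (𝓝 0) := by
  refine tendsto_of_uniform_approx fun ε hε => ?_
  obtain ⟨η, hη, hξη⟩ := Metric.mem_closure_iff.mp hξ ε hε
  refine ⟨fun x => ‖η x‖, 0, fun x => ?_, by simpa using hε, ?_⟩
  · exact (dist_norm_apply_le_dist ξ η x).trans_lt hξη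
  · filter_upwards [eventually_apply_eq_zero_of_mem_ISpan hαadd hη] with x hx
    rw [hx, norm_zero]

end

theorem ker_sigma_eq_and_contains_I_general
    {Γ : Type*} [AddCommGroup Γ] [LinearOrder Γ] [IsOrderedAddMonoid Γ] {A : Type*} [NonUnitalCStarAlgebra A]
    (α : Γ → (A →⋆ₙₐ[ℂ] A))
    (hαadd : ∀ s t : Γ, 0 ≤ s → 0 ≤ t → ∀ a : A, α (s + t) a = α s (α t a))
    (Ainf : Type*) [NonUnitalCStarAlgebra Ainf]
    (ι : Γ → (A →⋆ₙₐ[ℂ] Ainf))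
    (hcompat : ∀ s t : Γ, s ≤ t → ∀ a : A, ι t (α (t - s) a) = ι s a)
    (hiso : ∀ (s : Γ) (a : A), ‖ι s a‖ = ‖a‖)
    (σ : {ξ : lp (fun _ : Γ => A) ∞ // ξ ∈ BSet α} → Ainf)
    (hcont : Continuous σ)
    (hadd : ∀ ξ η (hξ : ξ ∈ BSet α) (hη : η ∈ BSet α) (hs : ξ + η ∈ BSet α),
      σ ⟨ξ + η, hs⟩ = σ ⟨ξ, hξ⟩ + σ ⟨η, hη⟩)
    (hsmul : ∀ (c : ℂ) ξ (hξ : ξ ∈ BSet α) (hs : c • ξ ∈ BSet α),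
      σ ⟨c • ξ, hs⟩ = c • σ ⟨ξ, hξ⟩)
    (hmu : ∀ (y : Γ) (a : A) (h : mu α y a ∈ BSet α), σ ⟨mu α y a, h⟩ = ι y a) :
    (∀ ξ (hξ : ξ ∈ BSet α),
      (σ ⟨ξ, hξ⟩ = 0 ↔ ∀ ε : ℝ, 0 < ε → ∃ z : Γ, ∀ x : Γ, z ≤ x → ‖ξ x‖ < ε)) ∧
    (∀ ξ (hξI : ξ ∈ ISet α) (hξB : ξ ∈ BSet α), σ ⟨ξ, hξB⟩ = 0) := by
  have hlim := fun ξ (hξ : ξ ∈ BSet α) =>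
    tendsto_norm_apply_sigma hαadd ι hcompat hiso σ hcont hadd hsmul hmu hξ
  have hker : ∀ ξ (hξ : ξ ∈ BSet α),
      σ ⟨ξ, hξ⟩ = 0 ↔ Tendsto (fun x => ‖ξ x‖) atTop (𝓝 0) := fun ξ hξ =>
    ⟨fun h => by simpa [h] using hlim ξ hξ,
      fun h => norm_eq_zero.mp (tendsto_nhds_unique (hlim ξ hξ) h)⟩
  refine ⟨fun ξ hξ => ?_, fun ξ hξI hξB =>
    (hker ξ hξB).2 (tendsto_norm_apply_of_mem_ISet hαadd hξI)⟩
  simpa using (hker ξ hξ).trans Metric.tendsto_atTop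

/-- With `α` injective and `σ : B → A∞` the surjective *-homomorphism determined by
`σ(μ_y(a)) = ι_y(a)` (where `A∞` is the direct limit with isometric canonical maps `ι`),
the kernel of `σ` is exactly `{ξ ∈ B : ‖ξ(x)‖ → 0}` (i.e. for each `ε > 0` eventually
`‖ξ(x)‖ < ε` for large `x`), and it contains the ideal `I`. -/
theorem ker_sigma_eq_and_contains_I
    {Γ : Type*} [AddCommGroup Γ] [LinearOrder Γ] [IsOrderedAddMonoid Γ] {A : Type*} [NonUnitalCStarAlgebra A]
    (α : Γ → (A →⋆ₙₐ[ℂ] A))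
    (hα0 : ∀ a : A, α 0 a = a)
    (hαadd : ∀ s t : Γ, 0 ≤ s → 0 ≤ t → ∀ a : A, α (s + t) a = α s (α t a))
    (hinj : ∀ s : Γ, 0 ≤ s → Function.Injective (α s))
    (Ainf : Type*) [NonUnitalCStarAlgebra Ainf]
    (ι : Γ → (A →⋆ₙₐ[ℂ] Ainf))
    (hcompat : ∀ s t : Γ, s ≤ t → ∀ a : A, ι t (α (t - s) a) = ι s a)
    (hiso : ∀ (s : Γ) (a : A), ‖ι s a‖ = ‖a‖)
    (hdense : DenseRange fun p : Γ × A => ι p.1 p.2)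
    (σ : {ξ : lp (fun _ : Γ => A) ∞ // ξ ∈ BSet α} → Ainf)
    (hcont : Continuous σ)
    (hadd : ∀ ξ η (hξ : ξ ∈ BSet α) (hη : η ∈ BSet α) (hs : ξ + η ∈ BSet α),
      σ ⟨ξ + η, hs⟩ = σ ⟨ξ, hξ⟩ + σ ⟨η, hη⟩)
    (hsmul : ∀ (c : ℂ) ξ (hξ : ξ ∈ BSet α) (hs : c • ξ ∈ BSet α),
      σ ⟨c • ξ, hs⟩ = c • σ ⟨ξ, hξ⟩)
    (hmu : ∀ (y : Γ) (a : A) (h : mu α y a ∈ BSet α), σ ⟨mu α y a, h⟩ = ι y a) :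
    (∀ ξ (hξ : ξ ∈ BSet α),
      (σ ⟨ξ, hξ⟩ = 0 ↔ ∀ ε : ℝ, 0 < ε → ∃ z : Γ, ∀ x : Γ, z ≤ x → ‖ξ x‖ < ε)) ∧
    (∀ ξ (hξI : ξ ∈ ISet α) (hξB : ξ ∈ BSet α), σ ⟨ξ, hξB⟩ = 0) :=
  ker_sigma_eq_and_contains_I_general α hαadd Ainf ι hcompat hiso σ hcont hadd hsmul hmu
end

section
/- For Γ = ℤ and α a single injective endomorphism of A, the algebra B is isomorphic to the direct limit of the direct system (B_n, φ_n)_{n∈ℤ} where each B_n is the subalgebra D₀ of ℓ∞(ℤ, A) of elements ξ with ‖ξ(i)‖ → 0 as i → −∞ and (ξ(i)) norm-convergent as i → +∞ (identified with B_ℤ ⊗ A), and φ_n : B_n → B_{n+1} is given by (φ_n(ξ))(i) = α(ξ(i)) for i > n and ξ(i) for i ≤ n. The isomorphism ψ satisfies ψ(φ^n(1_n ⊗ a)) = μ_n(a), where φ^n : B_n → B_∞ are the canonical maps. -/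
/-!
An injective *-homomorphism of C*-algebras is isometric, so each `ψ^n` is isometric, and
`ψ^{n+1} ∘ φ_n = ψ^n` makes the images of `D₀` under the `ψ^n` an increasing chain of subspaces,
whose union contains every `μ_n(a) = ψ^n(1_n ⊗ a)`. Conversely, if `ξ ∈ D₀` has limit `l` at `+∞`,
then `ψ^n ξ - μ_n(l)` vanishes at infinity, since `α^k` is contractive, so it is an `ℓ∞`-limit of
finitely supported sequences; these lie in `B` because `δ_m ⊗ a = μ_m(a) - μ_{m+1}(α a)`.
-/

open scoped ENNReal

/-- For a single endomorphism `α` of `A` and `n ∈ ℤ`, the map `μ_n : A → ℓ∞(ℤ, A)`,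
`(μ_n a)(m) = α^{m-n}(a)` for `m ≥ n` and `0` otherwise. -/
noncomputable def muZ {A : Type*} [NonUnitalCStarAlgebra A] (α : A →⋆ₙₐ[ℂ] A) (n : ℤ) (a : A) :
    lp (fun _ : ℤ => A) ∞ :=
  ⟨fun m => if n ≤ m then (⇑α)^[(m - n).toNat] a else 0, memℓp_infty ⟨‖a‖, by
    rintro r ⟨m, rfl⟩
    dsimp only
    split_ifs
    · generalize (m - n).toNat = k
      induction k with
      | zero => simp
      | succ k ih =>
        rw [Function.iterate_succ_apply']
        exact (NonUnitalStarAlgHom.norm_apply_le α _).trans ih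
    · simp⟩⟩

/-- `B = cl span {μ_n(a) : n ∈ ℤ, a ∈ A} ⊆ ℓ∞(ℤ, A)`. -/
noncomputable def BZ {A : Type*} [NonUnitalCStarAlgebra A] (α : A →⋆ₙₐ[ℂ] A) :
    Set (lp (fun _ : ℤ => A) ∞) :=
  closure (Submodule.span ℂ {ξ : lp (fun _ : ℤ => A) ∞ | ∃ n a, ξ = muZ α n a} : Set _)
open Filter in
/-- `D₀ = B_ℤ ⊗ A`: elements `ξ` of `ℓ∞(ℤ, A)` with `‖ξ(i)‖ → 0` as `i → -∞` and
`ξ(i)` norm-convergent as `i → +∞`. -/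
def D0 (A : Type*) [NonUnitalCStarAlgebra A] : Set (lp (fun _ : ℤ => A) ∞) :=
  {ξ | Tendsto (fun i : ℤ => ‖ξ i‖) atBot (nhds 0) ∧
    ∃ l : A, Tendsto (fun i : ℤ => ξ i) atTop (nhds l)}

/-- The connecting map `φ_n : B_n → B_{n+1}`: apply `α` beyond `n`. -/
noncomputable def phiZ {A : Type*} [NonUnitalCStarAlgebra A] (α : A →⋆ₙₐ[ℂ] A) (n : ℤ)
    (ξ : lp (fun _ : ℤ => A) ∞) : lp (fun _ : ℤ => A) ∞ :=
  ⟨fun i => if i ≤ n then ξ i else α (ξ i), memℓp_infty ⟨‖ξ‖, by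
    rintro r ⟨i, rfl⟩
    dsimp only
    split_ifs
    · exact lp.norm_apply_le_norm ENNReal.top_ne_zero ξ i
    · exact (NonUnitalStarAlgHom.norm_apply_le α _).trans
        (lp.norm_apply_le_norm ENNReal.top_ne_zero ξ i)⟩⟩

/-- The map `ψ^n : B_n → ℓ∞(ℤ, A)`: `(ψ^n ξ)(i) = α^{i-n}(ξ(i))` for `i ≥ n`,
`ξ(i)` for `i < n`. -/
noncomputable def psiZ {A : Type*} [NonUnitalCStarAlgebra A] (α : A →⋆ₙₐ[ℂ] A) (n : ℤ)
    (ξ : lp (fun _ : ℤ => A) ∞) : lp (fun _ : ℤ => A) ∞ :=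
  ⟨fun i => if n ≤ i then (⇑α)^[(i - n).toNat] (ξ i) else ξ i, memℓp_infty ⟨‖ξ‖, by
    rintro r ⟨i, rfl⟩
    dsimp only
    split_ifs
    · generalize (i - n).toNat = k
      induction k with
      | zero => exact lp.norm_apply_le_norm ENNReal.top_ne_zero ξ i
      | succ k ih =>
        rw [Function.iterate_succ_apply']
        exact (NonUnitalStarAlgHom.norm_apply_le α _).trans ih
    · exact lp.norm_apply_le_norm ENNReal.top_ne_zero ξ i⟩⟩

/-- The element `1_n ⊗ a ∈ B_ℤ ⊗ A = D₀`. -/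
noncomputable def oneTensorZ {A : Type*} [NonUnitalCStarAlgebra A] (n : ℤ) (a : A) :
    lp (fun _ : ℤ => A) ∞ :=
  ⟨fun i => if n ≤ i then a else 0, memℓp_infty ⟨‖a‖, by
    rintro r ⟨i, rfl⟩
    dsimp only
    split_ifs <;> simp⟩⟩

open scoped Topology CStarAlgebra
open Filter

theorem lp.hasSum_single_top {ι : Type*} {E : ι → Type*} [∀ i, NormedAddCommGroup (E i)]
    [DecidableEq ι] (f : lp E ∞) (hf : Tendsto (fun i => ‖f i‖) cofinite (𝓝 0)) :
    HasSum (fun i => lp.single ∞ i (f i)) f := by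
  rw [HasSum, Metric.tendsto_nhds]
  intro ε hε
  have hfin : {i | ε / 2 ≤ ‖f i‖}.Finite := by
    simpa only [not_lt] using eventually_cofinite.1 (hf.eventually_lt_const (half_pos hε))
  filter_upwards [eventually_ge_atTop hfin.toFinset] with s hs
  have hcompl : ∀ j, (f - ∑ i ∈ s, lp.single ∞ i (f i)) j = if j ∈ s then 0 else f j := by
    intro j
    rw [lp.coeFn_sub, lp.coeFn_sum, Pi.sub_apply, Finset.sum_apply]
    simp only [lp.coeFn_single, Finset.sum_pi_single]
    split_ifs <;> simp
  rw [dist_comm, dist_eq_norm]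
  refine (lp.norm_le_of_forall_le (half_pos hε).le fun j => ?_).trans_lt (half_lt_self hε)
  rw [hcompl]
  split_ifs with hj
  · simpa using (half_pos hε).le
  · exact le_of_not_ge fun h => hj (hs (hfin.mem_toFinset.2 h))

theorem NonUnitalStarAlgHom.coe_pow {R A : Type*} [Monoid R] [NonUnitalNonAssocSemiring A]
    [DistribMulAction R A] [Star A] (f : A →⋆ₙₐ[R] A) (k : ℕ) : ⇑(f ^ k) = (⇑f)^[k] :=
  hom_coe_pow _ rfl (fun _ _ => rfl) f k

theorem mem_D0_iff {A : Type*} [NonUnitalCStarAlgebra A] {ξ : lp (fun _ : ℤ => A) ∞} :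
    ξ ∈ D0 A ↔ Tendsto (fun i => ξ i) atBot (𝓝 0) ∧ ∃ l, Tendsto (fun i => ξ i) atTop (𝓝 l) :=
  tendsto_zero_iff_norm_tendsto_zero.symm.and Iff.rfl

def D0Submodule (A : Type*) [NonUnitalCStarAlgebra A] : Submodule ℂ (lp (fun _ : ℤ => A) ∞) where
  carrier := D0 A
  zero_mem' := mem_D0_iff.2 ⟨tendsto_const_nhds, 0, tendsto_const_nhds⟩
  add_mem' {ξ η} hξ hη := by
    obtain ⟨hξ₀, l, hl⟩ := mem_D0_iff.1 hξ
    obtain ⟨hη₀, l', hl'⟩ := mem_D0_iff.1 hη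
    exact mem_D0_iff.2 ⟨by simpa using hξ₀.add hη₀, l + l', by simpa using hl.add hl'⟩
  smul_mem' c ξ hξ := by
    obtain ⟨hξ₀, l, hl⟩ := mem_D0_iff.1 hξ
    exact mem_D0_iff.2 ⟨by simpa using hξ₀.const_smul c, c • l, by simpa using hl.const_smul c⟩

section
variable {A : Type*} [NonUnitalCStarAlgebra A] (α : A →⋆ₙₐ[ℂ] A)

theorem muZ_apply (n : ℤ) (a : A) (i : ℤ) :
    muZ α n a i = if n ≤ i then (α ^ (i - n).toNat) a else 0 := by
  rw [NonUnitalStarAlgHom.coe_pow]; rfl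

theorem phiZ_apply (n : ℤ) (ξ : lp (fun _ : ℤ => A) ∞) (i : ℤ) :
    phiZ α n ξ i = if i ≤ n then ξ i else α (ξ i) := rfl

theorem psiZ_apply (n : ℤ) (ξ : lp (fun _ : ℤ => A) ∞) (i : ℤ) :
    psiZ α n ξ i = if n ≤ i then (α ^ (i - n).toNat) (ξ i) else ξ i := by
  rw [NonUnitalStarAlgHom.coe_pow]; rfl

theorem oneTensorZ_apply (n : ℤ) (a : A) (i : ℤ) : oneTensorZ n a i = if n ≤ i then a else 0 :=
  rfl

noncomputable def psiZLinearMap (n : ℤ) : lp (fun _ : ℤ => A) ∞ →ₗ[ℂ] lp (fun _ : ℤ => A) ∞ where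
  toFun := psiZ α n
  map_add' ξ η := lp.ext <| funext fun i => by
    simp only [psiZ_apply, lp.coeFn_add, Pi.add_apply]
    split_ifs <;> simp
  map_smul' c ξ := lp.ext <| funext fun i => by
    simp only [psiZ_apply, lp.coeFn_smul, Pi.smul_apply, RingHom.id_apply]
    split_ifs <;> simp

theorem phiZ_mem_D0 (n : ℤ) {ξ : lp (fun _ : ℤ => A) ∞} (hξ : ξ ∈ D0 A) : phiZ α n ξ ∈ D0 A := by
  obtain ⟨hξ₀, l, hl⟩ := hξ
  refine ⟨hξ₀.congr' ?_, α l, ((map_continuous α).tendsto l |>.comp hl).congr' ?_⟩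
  · filter_upwards [eventually_le_atBot n] with i hi
    rw [phiZ_apply, if_pos hi]
  · filter_upwards [eventually_gt_atTop n] with i hi
    rw [Function.comp_apply, phiZ_apply, if_neg hi.not_ge]

theorem psiZ_phiZ (n : ℤ) (ξ : lp (fun _ : ℤ => A) ∞) :
    psiZ α (n + 1) (phiZ α n ξ) = psiZ α n ξ := by
  refine lp.ext <| funext fun i => ?_
  simp only [psiZ_apply, phiZ_apply]
  rcases lt_trichotomy i n with h | rfl | h
  · rw [if_neg (by omega), if_pos h.le, if_neg h.not_ge]
  · simp
  · rw [if_pos (by omega), if_neg h.not_ge, if_pos h.le,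
      show (i - n).toNat = (i - (n + 1)).toNat + 1 by omega, pow_succ]
    rfl


theorem oneTensorZ_mem_D0 (n : ℤ) (a : A) : oneTensorZ n a ∈ D0 A := by
  refine ⟨tendsto_const_nhds.congr' ?_, a, tendsto_const_nhds.congr' ?_⟩
  · filter_upwards [eventually_lt_atBot n] with i hi
    rw [oneTensorZ_apply, if_neg hi.not_ge, norm_zero]
  · filter_upwards [eventually_ge_atTop n] with i hi
    rw [oneTensorZ_apply, if_pos hi]

theorem psiZ_oneTensorZ (n : ℤ) (a : A) : psiZ α n (oneTensorZ n a) = muZ α n a := by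
  refine lp.ext <| funext fun i => ?_
  simp only [psiZ_apply, oneTensorZ_apply, muZ_apply]
  split_ifs <;> rfl

theorem norm_psiZ (hinj : Function.Injective α) (n : ℤ) (ξ : lp (fun _ : ℤ => A) ∞) :
    ‖psiZ α n ξ‖ = ‖ξ‖ := by
  have hpow (k : ℕ) : Function.Injective (α ^ k) := by
    rw [NonUnitalStarAlgHom.coe_pow]
    exact hinj.iterate k
  rw [lp.norm_eq_ciSup, lp.norm_eq_ciSup]
  congr 1 with i
  rw [psiZ_apply]
  split_ifs
  · exact NonUnitalStarAlgHom.norm_map _ (hpow _) _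
  · rfl

noncomputable def BZSubmodule : Submodule ℂ (lp (fun _ : ℤ => A) ∞) :=
  (Submodule.span ℂ {ξ | ∃ n a, ξ = muZ α n a}).topologicalClosure

theorem coe_BZSubmodule : (BZSubmodule α : Set (lp (fun _ : ℤ => A) ∞)) = BZ α :=
  Submodule.topologicalClosure_coe _

theorem muZ_mem_BZSubmodule (n : ℤ) (a : A) : muZ α n a ∈ BZSubmodule α :=
  Submodule.le_topologicalClosure _ (Submodule.subset_span ⟨n, a, rfl⟩)

theorem single_eq_muZ_sub_muZ (m : ℤ) (a : A) :
    lp.single ∞ m a = muZ α m a - muZ α (m + 1) (α a) := by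
  refine lp.ext <| funext fun i => ?_
  rw [lp.coeFn_sub, Pi.sub_apply, muZ_apply, muZ_apply]
  rcases lt_trichotomy i m with h | rfl | h
  · rw [lp.single_apply_ne _ _ _ h.ne, if_neg h.not_ge, if_neg (by omega), sub_zero]
  · simp
  · rw [lp.single_apply_ne _ _ _ h.ne', if_pos h.le, if_pos (by omega),
      show (i - m).toNat = (i - (m + 1)).toNat + 1 by omega, pow_succ]
    exact (sub_self _).symm

theorem mem_BZSubmodule_of_tendsto_cofinite {ζ : lp (fun _ : ℤ => A) ∞}
    (hζ : Tendsto (fun i => ‖ζ i‖) cofinite (𝓝 0)) : ζ ∈ BZSubmodule α :=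
  (Submodule.isClosed_topologicalClosure _).mem_of_tendsto (lp.hasSum_single_top ζ hζ) <|
    .of_forall fun s => Submodule.sum_mem _ fun m _ => by
      rw [single_eq_muZ_sub_muZ α]
      exact sub_mem (muZ_mem_BZSubmodule α _ _) (muZ_mem_BZSubmodule α _ _)

theorem tendsto_norm_psiZ_sub_muZ_cofinite (n : ℤ) {ξ : lp (fun _ : ℤ => A) ∞} {l : A}
    (hξ₀ : Tendsto (fun i => ‖ξ i‖) atBot (𝓝 0)) (hl : Tendsto (fun i => ξ i) atTop (𝓝 l)) :
    Tendsto (fun i => ‖(psiZ α n ξ - muZ α n l) i‖) cofinite (𝓝 0) := by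
  rw [Int.cofinite_eq, tendsto_sup]
  constructor
  · refine hξ₀.congr' ?_
    filter_upwards [eventually_lt_atBot n] with i hi
    rw [lp.coeFn_sub, Pi.sub_apply, psiZ_apply, muZ_apply, if_neg hi.not_ge, if_neg hi.not_ge,
      sub_zero]
  · refine squeeze_zero' (.of_forall fun _ => norm_nonneg _) ?_
      (tendsto_iff_norm_sub_tendsto_zero.1 hl)
    filter_upwards [eventually_ge_atTop n] with i hi
    rw [lp.coeFn_sub, Pi.sub_apply, psiZ_apply, muZ_apply, if_pos hi, if_pos hi, ← map_sub]
    exact NonUnitalStarAlgHom.norm_apply_le _ _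

theorem psiZ_mem_BZ (n : ℤ) {ξ : lp (fun _ : ℤ => A) ∞} (hξ : ξ ∈ D0 A) : psiZ α n ξ ∈ BZ α := by
  obtain ⟨hξ₀, l, hl⟩ := hξ
  rw [← coe_BZSubmodule, SetLike.mem_coe, ← sub_add_cancel (psiZ α n ξ) (muZ α n l)]
  exact add_mem (mem_BZSubmodule_of_tendsto_cofinite α
    (tendsto_norm_psiZ_sub_muZ_cofinite α n hξ₀ hl)) (muZ_mem_BZSubmodule α n l)

theorem monotone_map_psiZLinearMap :
    Monotone fun n => (D0Submodule A).map (psiZLinearMap α n) :=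
  monotone_int_of_le_succ fun n => by
    rintro _ ⟨ξ, hξ, rfl⟩
    exact ⟨phiZ α n ξ, phiZ_mem_D0 α n hξ, psiZ_phiZ α n ξ⟩

theorem closure_iUnion_image_psiZ : closure (⋃ n : ℤ, psiZ α n '' D0 A) = BZ α := by
  have hunion : ⋃ n : ℤ, psiZ α n '' D0 A =
      ↑(⨆ n, (D0Submodule A).map (psiZLinearMap α n)) := by
    rw [Submodule.coe_iSup_of_directed _ (monotone_map_psiZLinearMap α).directed_le]
    rfl
  refine subset_antisymm ?_ ?_
  · refine closure_minimal (Set.iUnion_subset fun n => ?_) isClosed_closure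
    exact Set.image_subset_iff.2 fun ξ hξ => psiZ_mem_BZ α n hξ
  · rw [hunion]
    refine closure_mono (SetLike.coe_subset_coe.2 <| Submodule.span_le.2 ?_)
    rintro _ ⟨n, a, rfl⟩
    exact Submodule.mem_iSup_of_mem n
      ⟨oneTensorZ n a, oneTensorZ_mem_D0 n a, psiZ_oneTensorZ α n a⟩

end

/-- For `Γ = ℤ` and `α` a single injective endomorphism, `B` is (isometrically isomorphic
to) the direct limit of the system `(B_n, φ_n)` with `B_n = B_ℤ ⊗ A = D₀`: the maps
`ψ^n` are compatible with the connecting maps, isometric, take values in `B`, carry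
`1_n ⊗ a` to `μ_n(a)`, and their images have dense union in `B`. -/
theorem BZ_is_direct_limit {A : Type*} [NonUnitalCStarAlgebra A] (α : A →⋆ₙₐ[ℂ] A)
    (hinj : Function.Injective α) :
    (∀ (n : ℤ) (ξ : lp (fun _ : ℤ => A) ∞), ξ ∈ D0 A → phiZ α n ξ ∈ D0 A) ∧
    (∀ (n : ℤ) (ξ : lp (fun _ : ℤ => A) ∞), psiZ α (n + 1) (phiZ α n ξ) = psiZ α n ξ) ∧
    (∀ (n : ℤ) (ξ : lp (fun _ : ℤ => A) ∞), ξ ∈ D0 A → psiZ α n ξ ∈ BZ α) ∧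
    (∀ (n : ℤ) (ξ : lp (fun _ : ℤ => A) ∞), ξ ∈ D0 A → ‖psiZ α n ξ‖ = ‖ξ‖) ∧
    (∀ (n : ℤ) (a : A), oneTensorZ n a ∈ D0 A ∧ psiZ α n (oneTensorZ n a) = muZ α n a) ∧
    closure (⋃ n : ℤ, psiZ α n '' D0 A) = BZ α :=
  ⟨fun n _ => phiZ_mem_D0 α n, psiZ_phiZ α, fun n _ => psiZ_mem_BZ α n,
    fun n ξ _ => norm_psiZ α hinj n ξ, fun n a => ⟨oneTensorZ_mem_D0 n a, psiZ_oneTensorZ α n a⟩,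
    closure_iUnion_image_psiZ α⟩
end
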